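/- Let $a_1, a_2$ be real constants with $a_1^2 \neq a_2^2$, let $C, \tilde C$ be real constants, and define on $\mathbb{R}$ the functions $x_{12}(t) = \tfrac{2}{3}(a_1^2 - a_2^2) t + C$, $X(t) = \frac{3 a_1 a_2}{a_1^2 - a_2^2} \mathrm{sgn}(x_{12}(t)) e^{-|x_{12}(t)|} + \tilde C$, $x_1(t) = \tfrac{2}{3} a_1^2 t - X(t) + \tfrac{1}{2} C$, and $x_2(t) = \tfrac{2}{3} a_2^2 t - X(t) - \tfrac{1}{2} C$. Then on every open interval $J$ on which $x_{12}(t) \neq 0$, the pair $(x_1, x_2)$ is differentiable and satisfies the mCH $2$-peakon system. -/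

import Mathlib

/-! On each side of `0` the function `y ↦ sgn y · e^{-|y|}` is `e^{-y}` or `-e^{y}`, so away from
`0` its derivative is `-e^{-|y|}`. Since `x₁₂` is affine with slope `(2/3)(a₁² - a₂²)`, the chain
rule gives `X' = -2 a₁ a₂ e^{-|x₁₂|}`, and `x₁ - x₂ = x₁₂` turns this into the peakon equations. -/

open Real Filter Topology

theorem hasDerivAt_sign_mul_exp_neg_abs {y : ℝ} (hy : y ≠ 0) :
    HasDerivAt (fun z => sign z * exp (-|z|)) (-exp (-|y|)) y := by
  rcases hy.lt_or_gt with hneg | hpos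
  · have hloc : (fun z => sign z * exp (-|z|)) =ᶠ[𝓝 y] fun z => -exp z := by
      filter_upwards [Iio_mem_nhds hneg] with z hz
      rw [sign_of_neg hz, abs_of_neg hz, neg_neg, neg_one_mul]
    rw [abs_of_neg hneg, neg_neg]
    exact (hasDerivAt_exp y).neg.congr_of_eventuallyEq hloc
  · have hloc : (fun z => sign z * exp (-|z|)) =ᶠ[𝓝 y] fun z => exp (-z) := by
      filter_upwards [Ioi_mem_nhds hpos] with z hz
      rw [sign_of_pos hz, abs_of_pos hz, one_mul]
    rw [abs_of_pos hpos, ← mul_neg_one]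
    exact (hasDerivAt_neg y).exp.congr_of_eventuallyEq hloc

theorem mCH_two_peakon_explicit_solution
    (a₁ a₂ : ℝ) (hne : a₁ ^ 2 ≠ a₂ ^ 2) (C C' : ℝ)
    (x₁₂ X x₁ x₂ : ℝ → ℝ)
    (hx₁₂ : ∀ t, x₁₂ t = (2/3) * (a₁ ^ 2 - a₂ ^ 2) * t + C)
    (hX : ∀ t, X t = (3 * a₁ * a₂ / (a₁ ^ 2 - a₂ ^ 2))
        * Real.sign (x₁₂ t) * Real.exp (-|x₁₂ t|) + C')
    (hx₁ : ∀ t, x₁ t = (2/3) * a₁ ^ 2 * t - X t + (1/2) * C)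
    (hx₂ : ∀ t, x₂ t = (2/3) * a₂ ^ 2 * t - X t - (1/2) * C)
    (J : Set ℝ)
    (hJne : ∀ t ∈ J, x₁₂ t ≠ 0) :
    ∀ t ∈ J,
      HasDerivAt x₁ ((2/3) * a₁ ^ 2
        + 2 * a₁ * a₂ * Real.exp (-|x₁ t - x₂ t|)) t
      ∧ HasDerivAt x₂ ((2/3) * a₂ ^ 2
        + 2 * a₁ * a₂ * Real.exp (-|x₁ t - x₂ t|)) t := by
  intro t ht
  have hD : a₁ ^ 2 - a₂ ^ 2 ≠ 0 := sub_ne_zero.mpr hne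
  have hx₁₂' : HasDerivAt x₁₂ ((2/3) * (a₁ ^ 2 - a₂ ^ 2)) t := by
    rw [funext hx₁₂]
    simpa using ((hasDerivAt_id t).const_mul ((2/3) * (a₁ ^ 2 - a₂ ^ 2))).add_const C
  have hX' : HasDerivAt X (-(2 * a₁ * a₂ * exp (-|x₁₂ t|))) t := by
    have hXfun : X = fun s => 3 * a₁ * a₂ / (a₁ ^ 2 - a₂ ^ 2)
        * (sign (x₁₂ s) * exp (-|x₁₂ s|)) + C' := funext fun s => by rw [hX]; ring
    rw [hXfun]
    refine ((((hasDerivAt_sign_mul_exp_neg_abs (hJne t ht)).comp t hx₁₂').const_mul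
      (3 * a₁ * a₂ / (a₁ ^ 2 - a₂ ^ 2))).add_const C').congr_deriv ?_
    field_simp
  have hdiff : x₁ t - x₂ t = x₁₂ t := by rw [hx₁, hx₂, hx₁₂]; ring
  rw [hdiff, funext hx₁, funext hx₂]
  constructor
  · simpa using (((hasDerivAt_id t).const_mul ((2/3) * a₁ ^ 2)).sub hX').add_const ((1/2) * C)
  · simpa using (((hasDerivAt_id t).const_mul ((2/3) * a₂ ^ 2)).sub hX').sub_const ((1/2) * C)
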